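/- Let X be a nonempty complete subset of a normed space Y and let F be a multivalued mapping from X to Y with nonempty bounded values that is an α-contraction for some α < 1 (with respect to the metric induced by the norm). Assume that for each x ∈ X there exists a nearest point t of F(x) to x (i.e. t ∈ F(x) with ‖x−t‖ = d(x,F(x))) such that t ∈ I_X(x). Then for each x ∈ X with x ∉ F(x) there exists z ∈ X with z ≠ x and (1−α) ‖x−z‖ ≤ d(x,F(x)) − d(z,F(z)), and F has a fixed point. -/

import Mathlib

open Metric Filter

/-- The inward set `I_X(x) = x + {λ(z −x) : z ∈ X, λ ≥ 1}` in a normed space. -/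
def inwardSet {Y : Type*} [NormedAddCommGroup Y] [NormedSpace ℝ Y]
    (X : Set Y) (x : Y) : Set Y :=
  {t | ∃ z ∈ X, ∃ l : ℝ, 1 ≤ l ∧ t = x + l • (z - x)}

open Topology

/-! If `t ∈ F x` is a nearest point to `x` lying in the inward set, the segment `[x, t]` meets
`X` at some `z ≠ x`, and the contraction property gives
`d(z, F z) ≤ d(x, F x) - (1 - α) ‖x - z‖`. So the continuous function `x ↦ d(x, F x)` admits a
Caristi descent step at every point that is not fixed, while Caristi's theorem on the complete
space `X` provides a point admitting none. -/

section Caristi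

variable {M : Type*} [MetricSpace M] {c : ℝ} {f : M → ℝ} {x y : M}

/-- The lower set of `x` for the Brøndsted order. -/
def caristiSet (c : ℝ) (f : M → ℝ) (x : M) : Set M :=
  {y | c * dist x y ≤ f x - f y}

theorem self_mem_caristiSet : x ∈ caristiSet c f x := by
  simp [caristiSet]

theorem caristiSet_subset (hc : 0 ≤ c) (hy : y ∈ caristiSet c f x) :
    caristiSet c f y ⊆ caristiSet c f x := fun z hz => by
  have := mul_le_mul_of_nonneg_left (dist_triangle x y z) hc
  simp only [caristiSet, Set.mem_ofPred_eq] at hy hz ⊢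
  linarith

theorem isClosed_caristiSet (hf : LowerSemicontinuous f) : IsClosed (caristiSet c f x) := by
  have hg : LowerSemicontinuous fun y => c * dist x y + f y :=
    (continuous_const.mul (continuous_const.dist continuous_id)).lowerSemicontinuous.add hf
  simp only [caristiSet, le_sub_iff_add_le]
  exact hg.isClosed_preimage (f x)

theorem exists_mem_caristiSet_subset_closedBall (hc : 0 < c) (hf : BddBelow (Set.range f))
    (x : M) {ε : ℝ} (hε : 0 < ε) :
    ∃ x' ∈ caristiSet c f x, caristiSet c f x' ⊆ closedBall x' ε := by
  have hne : (f '' caristiSet c f x).Nonempty := ⟨f x, x, self_mem_caristiSet, rfl⟩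
  have hbdd : BddBelow (f '' caristiSet c f x) := hf.mono (Set.image_subset_range _ _)
  obtain ⟨_, ⟨x', hx', rfl⟩, hx'ε⟩ := Real.lt_sInf_add_pos hne (mul_pos hc hε)
  refine ⟨x', hx', fun y hy => ?_⟩
  have hmin : sInf (f '' caristiSet c f x) ≤ f y :=
    csInf_le hbdd ⟨y, caristiSet_subset hc.le hx' hy, rfl⟩
  have : c * dist y x' ≤ c * ε := by
    rw [dist_comm]
    exact hy.trans (by linarith)
  exact (mul_le_mul_iff_of_pos_left hc).1 this

/-- Caristi's theorem, in Takahashi's form: some point is minimal in the Brøndsted order. -/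
theorem exists_forall_mem_caristiSet_eq [CompleteSpace M] [Nonempty M] (hc : 0 < c)
    (hf : LowerSemicontinuous f) (hbdd : BddBelow (Set.range f)) :
    ∃ x, ∀ y ∈ caristiSet c f x, y = x := by
  obtain ⟨x₀⟩ := ‹Nonempty M›
  -- `u (n + 1)` nearly minimises `f` on the set of `u n`, so the nested closed sets
  -- `caristiSet c f (u n)` shrink to a single point.
  choose next hnext_mem hnext_sub using fun (n : ℕ) (x : M) =>
    exists_mem_caristiSet_subset_closedBall hc hbdd x (Nat.one_div_pos_of_nat (n := n))
  let u : ℕ → M := fun n => Nat.rec (next 0 x₀) (fun n x => next (n + 1) x) n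
  have hu_anti : Antitone fun n => caristiSet c f (u n) :=
    antitone_nat_of_succ_le fun n => caristiSet_subset hc.le (hnext_mem _ _)
  have hu_close : ∀ n, ∀ a ∈ caristiSet c f (u n), ∀ b ∈ caristiSet c f (u n),
      dist a b ≤ 2 * (1 / ((n : ℝ) + 1)) := by
    intro n a ha b hb
    have hsub : caristiSet c f (u n) ⊆ closedBall (u n) (1 / ((n : ℝ) + 1)) := by
      cases n <;> exact hnext_sub _ _
    linarith [dist_triangle_right a b (u n), mem_closedBall.1 (hsub ha),
      mem_closedBall.1 (hsub hb)]
  have hlim : Tendsto (fun n : ℕ => 2 * (1 / ((n : ℝ) + 1))) atTop (𝓝 0) := by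
    simpa using (tendsto_one_div_add_atTop_nhds_zero_nat (𝕜 := ℝ)).const_mul 2
  have hu_cauchy : CauchySeq u := cauchySeq_of_le_tendsto_0 _ (fun n m N hn hm =>
    hu_close N _ (hu_anti hn self_mem_caristiSet) _ (hu_anti hm self_mem_caristiSet)) hlim
  obtain ⟨x, hx⟩ := cauchySeq_tendsto_of_complete hu_cauchy
  have hx_mem : ∀ n, x ∈ caristiSet c f (u n) := fun n =>
    (isClosed_caristiSet hf).mem_of_tendsto hx
      (eventually_atTop.2 ⟨n, fun m hm => hu_anti hm self_mem_caristiSet⟩)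
  refine ⟨x, fun y hy => dist_le_zero.1 (ge_of_tendsto' hlim fun n => ?_)⟩
  exact hu_close n y (caristiSet_subset hc.le (hx_mem n) hy) x (hx_mem n)

end Caristi

theorem dist_add_infDist_le_infDist_add_hausdorffDist {Y : Type*} [PseudoMetricSpace Y]
    {A B : Set Y} {x z t : Y} (hAB : hausdorffEDist A B ≠ ⊤) (ht : t ∈ A)
    (hxt : dist x t = infDist x A) (hzt : dist x z + dist z t = dist x t) :
    dist x z + infDist z B ≤ infDist x A + hausdorffDist A B := by
  have := (infDist_le_infDist_add_hausdorffDist (x := z) hAB).trans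
    (add_le_add_left (infDist_le_dist_of_mem ht) _)
  linarith

theorem lipschitzWith_infDist_self {Y : Type*} [PseudoMetricSpace Y] {X : Set Y}
    {F : X → Set Y} {K : ℝ} (hfin : ∀ x y, hausdorffEDist (F x) (F y) ≠ ⊤)
    (hF : ∀ x y, hausdorffDist (F x) (F y) ≤ K * dist x y) :
    LipschitzWith (1 + K).toNNReal (fun x : X => infDist (x : Y) (F x)) := by
  refine LipschitzWith.of_le_add_mul' _ fun a b => ?_
  have h₁ : infDist (a : Y) (F a) ≤ infDist (b : Y) (F a) + dist a b :=
    infDist_le_infDist_add_dist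
  have h₂ := infDist_le_infDist_add_hausdorffDist (x := (b : Y)) (hfin b a)
  have h₃ := hF b a
  rw [dist_comm b a] at h₃
  linarith

theorem exists_wbtw_of_mem_inwardSet {Y : Type*} [NormedAddCommGroup Y] [NormedSpace ℝ Y]
    {X : Set Y} {x t : Y} (ht : t ∈ inwardSet X x) :
    ∃ z ∈ X, Wbtw ℝ x z t ∧ (z = x → t = x) := by
  obtain ⟨z, hz, l, hl, rfl⟩ := ht
  have hl₀ : l ≠ 0 := (zero_lt_one.trans_le hl).ne'
  refine ⟨z, hz, ⟨l⁻¹, ⟨inv_nonneg.2 (zero_le_one.trans hl), inv_le_one_of_one_le₀ hl⟩, ?_⟩,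
    fun h => by simp [h]⟩
  simp [AffineMap.lineMap_apply, smul_smul, inv_mul_cancel₀ hl₀]

/-- **Theorem 3.7.** Let `X` be a nonempty complete subset of a normed space `Y` and `F`
an `α`-contraction (`α < 1`) from `X` to `Y` with nonempty bounded values. If each
`x ∈ X` has a nearest point `t` in `F(x)` with `t ∈ I_X(x)`, then for each `x ∈ X` with
`x ∉ F(x)` there exists `z ∈ X`, `z ≠ x`, with
`(1−α)·‖x−z‖ ≤ d(x,F(x)) − d(z,F(z))`, and `F` has a fixed point. -/
theorem fixed_point_of_inward_contraction
    {Y : Type*} [NormedAddCommGroup Y] [NormedSpace ℝ Y]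
    (X : Set Y) (hX : X.Nonempty) (hXc : IsComplete X)
    (α : ℝ) (hα1 : α < 1)
    (F : X → Set Y) (hFne : ∀ x, (F x).Nonempty)
    (hFbdd : ∀ x, Bornology.IsBounded (F x))
    (hcontr : ∀ x y : X, hausdorffDist (F y) (F x) ≤ α * ‖(y : Y) - (x : Y)‖)
    (hnear : ∀ x : X, ∃ t ∈ F x,
      ‖(x : Y) - t‖ = infDist (x : Y) (F x) ∧ t ∈ inwardSet X (x : Y)) :
    (∀ x : X, (x : Y) ∉ F x → ∃ z : X, z ≠ x ∧
      (1 - α) * ‖(x : Y) - (z : Y)‖ ≤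
        infDist (x : Y) (F x) - infDist (z : Y) (F z)) ∧
    ∃ x : X, (x : Y) ∈ F x := by
  have hfin : ∀ x y : X, hausdorffEDist (F x) (F y) ≠ ⊤ := fun x y =>
    hausdorffEDist_ne_top_of_nonempty_of_bounded (hFne x) (hFne y) (hFbdd x) (hFbdd y)
  have hF : ∀ x y : X, hausdorffDist (F x) (F y) ≤ α * dist x y := fun x y => by
    simpa only [Subtype.dist_eq, dist_eq_norm] using hcontr y x
  set f : X → ℝ := fun x => infDist (x : Y) (F x)
  have hstep : ∀ x : X, (x : Y) ∉ F x → ∃ z : X, z ≠ x ∧ z ∈ caristiSet (1 - α) f x := by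
    intro x hx
    obtain ⟨t, ht, hxt, ht_inward⟩ := hnear x
    obtain ⟨z, hz, hxzt, hzx⟩ := exists_wbtw_of_mem_inwardSet ht_inward
    refine ⟨⟨z, hz⟩, fun h => hx (hzx (congrArg Subtype.val h) ▸ ht), ?_⟩
    have := dist_add_infDist_le_infDist_add_hausdorffDist (hfin x ⟨z, hz⟩) ht
      (by rwa [dist_eq_norm]) hxzt.dist_add_dist
    have := hF x ⟨z, hz⟩
    simp only [caristiSet, Set.mem_ofPred_eq, Subtype.dist_eq, f] at this ⊢
    linarith
  refine ⟨fun x hx => by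
    simpa only [caristiSet, Set.mem_ofPred_eq, Subtype.dist_eq, dist_eq_norm] using hstep x hx,
    ?_⟩
  by_contra! hfixed
  have := hX.to_subtype
  have := hXc.completeSpace_coe
  obtain ⟨x, hx⟩ := exists_forall_mem_caristiSet_eq (sub_pos.2 hα1)
    (lipschitzWith_infDist_self hfin hF).continuous.lowerSemicontinuous
    ⟨0, by rintro _ ⟨x, rfl⟩; exact infDist_nonneg⟩
  obtain ⟨z, hzx, hz⟩ := hstep x (hfixed x)
  exact hzx (hx z hz)
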